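/- arXiv:0811.0400 — 3 statements merged into one kernel-verified Lean document; each statement's English description precedes it below -/
import Mathlib

section
/- Let V be a vector space over a field K and let Δ : V → V ⊗ V and β : V → V be K-linear maps. Set Δ_L := Δ − Δ^op where Δ^op := τ ∘ Δ with τ(a ⊗ b) = b ⊗ a, and let c_β(Λ) := (Λ ⊗ β) ∘ Λ − (β ⊗ Λ) ∘ Λ. For σ in the symmetric group S₃ on {1,2,3}, let Φ_σ : V⊗V⊗V → V⊗V⊗V be the K-linear map with Φ_σ(x₁ ⊗ x₂ ⊗ x₃) = x_{σ⁻¹(1)} ⊗ x_{σ⁻¹(2)} ⊗ x_{σ⁻¹(3)}. Then c_β(Δ_L) + C ∘ c_β(Δ_L) + C² ∘ c_β(Δ_L) = 2 Σ_{σ ∈ S₃} sgn(σ) Φ_σ ∘ c_β(Δ), where C is the 3-cycle map a ⊗ b ⊗ c ↦ b ⊗ c ⊗ a (so C² is a ⊗ b ⊗ c ↦ c ⊗ a ⊗ b) and sgn(σ) is the signature of σ. -/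
open TensorProduct

set_option linter.unusedSectionVars false

section Defs

variable {K V : Type*} [Field K] [AddCommGroup V] [Module K V]

/-- The value of Φ_σ on a triple of vectors: x_{σ⁻¹(1)} ⊗ x_{σ⁻¹(2)} ⊗ x_{σ⁻¹(3)}
(indices taken in Fin 3). -/
noncomputable def phiFun (σ : Equiv.Perm (Fin 3)) (m : Fin 3 → V) :
    V ⊗[K] (V ⊗[K] V) :=
  m (σ⁻¹ 0) ⊗ₜ[K] (m (σ⁻¹ 1) ⊗ₜ[K] m (σ⁻¹ 2))

lemma fin3_cases (σ : Equiv.Perm (Fin 3)) (i : Fin 3) :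
    i = σ⁻¹ 0 ∨ i = σ⁻¹ 1 ∨ i = σ⁻¹ 2 := by
  have hk : ∀ k : Fin 3, k = 0 ∨ k = 1 ∨ k = 2 := by decide
  rcases hk (σ i) with h | h | h
  · left; rw [← h]; simp
  · right; left; rw [← h]; simp
  · right; right; rw [← h]; simp

lemma phiFun_update_add (σ : Equiv.Perm (Fin 3)) (m : Fin 3 → V) (i : Fin 3)
    (x y : V) :
    phiFun (K := K) σ (Function.update m i (x + y))
      = phiFun (K := K) σ (Function.update m i x)
        + phiFun (K := K) σ (Function.update m i y) := by
  rcases fin3_cases σ i with h | h | h <;> subst h <;>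
    simp [phiFun, Function.update_apply, add_tmul, tmul_add]

lemma phiFun_update_smul (σ : Equiv.Perm (Fin 3)) (m : Fin 3 → V) (i : Fin 3)
    (c : K) (x : V) :
    phiFun (K := K) σ (Function.update m i (c • x))
      = c • phiFun (K := K) σ (Function.update m i x) := by
  rcases fin3_cases σ i with h | h | h <;> subst h <;>
    simp [phiFun, Function.update_apply, smul_tmul, tmul_smul]

lemma update_vec0 (x y z w : V) : Function.update ![x, y, z] 0 w = ![w, y, z] := by
  funext j; fin_cases j <;> simp [Function.update]

lemma update_vec1 (x y z w : V) : Function.update ![x, y, z] 1 w = ![x, w, z] := by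
  funext j; fin_cases j <;> simp [Function.update]

lemma update_vec2 (x y z w : V) : Function.update ![x, y, z] 2 w = ![x, y, w] := by
  funext j; fin_cases j <;> simp [Function.update]

/-- Φ_σ as a trilinear map: (x₁, x₂, x₃) ↦ x_{σ⁻¹(1)} ⊗ x_{σ⁻¹(2)} ⊗ x_{σ⁻¹(3)}. -/
noncomputable def phiTri (σ : Equiv.Perm (Fin 3)) :
    V →ₗ[K] V →ₗ[K] V →ₗ[K] V ⊗[K] (V ⊗[K] V) :=
  LinearMap.mk₂ K
    (fun x y =>
      { toFun := fun z => phiFun (K := K) σ ![x, y, z]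
        map_add' := fun z z' => by
          have h := phiFun_update_add (K := K) (V := V) σ ![x, y, z] 2 z z'
          simpa [update_vec2] using h
        map_smul' := fun c z => by
          have h := phiFun_update_smul (K := K) (V := V) σ ![x, y, z] 2 c z
          simpa [update_vec2] using h })
    (fun x x' y => by
      ext z
      have h := phiFun_update_add (K := K) (V := V) σ ![x, y, z] 0 x x'
      simpa [update_vec0] using h)
    (fun c x y => by
      ext z
      have h := phiFun_update_smul (K := K) (V := V) σ ![x, y, z] 0 c x
      simpa [update_vec0] using h)
    (fun x y y' => by
      ext z
      have h := phiFun_update_add (K := K) (V := V) σ ![x, y, z] 1 y y'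
      simpa [update_vec1] using h)
    (fun c x y => by
      ext z
      have h := phiFun_update_smul (K := K) (V := V) σ ![x, y, z] 1 c y
      simpa [update_vec1] using h)

/-- Φ_σ : V ⊗ V ⊗ V → V ⊗ V ⊗ V, the linear map determined by
Φ_σ(x₁ ⊗ x₂ ⊗ x₃) = x_{σ⁻¹(1)} ⊗ x_{σ⁻¹(2)} ⊗ x_{σ⁻¹(3)}. -/
noncomputable def Phi (σ : Equiv.Perm (Fin 3)) :
    V ⊗[K] (V ⊗[K] V) →ₗ[K] V ⊗[K] (V ⊗[K] V) :=
  TensorProduct.lift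
    ((TensorProduct.lift.equiv (RingHom.id K) V V (V ⊗[K] (V ⊗[K] V))).toLinearMap ∘ₗ phiTri σ)

/-- Defining property of `Phi`. -/
lemma Phi_tmul (σ : Equiv.Perm (Fin 3)) (x y z : V) :
    Phi (K := K) σ (x ⊗ₜ[K] (y ⊗ₜ[K] z))
      = ![x, y, z] (σ⁻¹ 0) ⊗ₜ[K] (![x, y, z] (σ⁻¹ 1) ⊗ₜ[K] ![x, y, z] (σ⁻¹ 2)) := by
  simp [Phi, phiTri, phiFun]

/-- Δ^op := τ ∘ Δ, the opposite comultiplication. -/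
noncomputable def deltaOp (Δ : V →ₗ[K] V ⊗[K] V) : V →ₗ[K] V ⊗[K] V :=
  (TensorProduct.comm K V V).toLinearMap ∘ₗ Δ

/-- The β-coassociator c_β(Λ) := (Λ ⊗ β) ∘ Λ − (β ⊗ Λ) ∘ Λ, with values in
V ⊗ (V ⊗ V). -/
noncomputable def coassoc (Λ : V →ₗ[K] V ⊗[K] V) (β : V →ₗ[K] V) :
    V →ₗ[K] V ⊗[K] (V ⊗[K] V) :=
  (TensorProduct.assoc K V V V).toLinearMap ∘ₗ TensorProduct.map Λ β ∘ₗ Λ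
    - TensorProduct.map β Λ ∘ₗ Λ

variable (K V) in
/-- The 3-cycle map C : a ⊗ b ⊗ c ↦ b ⊗ c ⊗ a on V ⊗ (V ⊗ V). -/
noncomputable def cyc3 : V ⊗[K] (V ⊗[K] V) →ₗ[K] V ⊗[K] (V ⊗[K] V) :=
  (TensorProduct.assoc K V V V).toLinearMap
    ∘ₗ (TensorProduct.comm K V (V ⊗[K] V)).toLinearMap

end Defs

/-!
Write `Δ_L = (1 - τ) ∘ Δ`. Then `Δ_L ⊗ β` and `β ⊗ Δ_L` factor as `(1 - τ₁₂) ∘ (Δ ⊗ β)` and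
`(1 - τ₂₃) ∘ (β ⊗ Δ)`, and the cyclic sum `1 + C + C²` turns both `1 - τ₁₂` and `1 - τ₂₃` into
the antisymmetrizer `A = ∑ sgn(σ) Φ_σ`. Hence
`(1 + C + C²) ∘ c_β(Δ_L) = A ∘ ((Δ ⊗ β) - (β ⊗ Δ)) ∘ (1 - τ) ∘ Δ`.
Since `A` absorbs the even permutation `C` and `C ∘ (β ⊗ Δ) = (Δ ⊗ β) ∘ τ`, precomposing with `τ`
exchanges `A ∘ (Δ ⊗ β)` and `A ∘ (β ⊗ Δ)`, which leaves `2 A ∘ c_β(Δ)`.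
-/

namespace Coassociator

variable {K V : Type*} [Field K] [AddCommGroup V] [Module K V]

variable (K V) in
noncomputable def antisymmetrizer : V ⊗[K] (V ⊗[K] V) →ₗ[K] V ⊗[K] (V ⊗[K] V) :=
  ∑ σ : Equiv.Perm (Fin 3), (Equiv.Perm.sign σ : ℤ) • Phi σ

variable (K V) in
noncomputable def swap12 : V ⊗[K] (V ⊗[K] V) →ₗ[K] V ⊗[K] (V ⊗[K] V) :=
  (TensorProduct.assoc K V V V).toLinearMap ∘ₗ (TensorProduct.comm K V V).toLinearMap.rTensor V
    ∘ₗ (TensorProduct.assoc K V V V).symm.toLinearMap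

variable (K V) in
noncomputable def swap23 : V ⊗[K] (V ⊗[K] V) →ₗ[K] V ⊗[K] (V ⊗[K] V) :=
  (TensorProduct.comm K V V).toLinearMap.lTensor V

variable (K V) in
noncomputable def cyclicSum : V ⊗[K] (V ⊗[K] V) →ₗ[K] V ⊗[K] (V ⊗[K] V) :=
  LinearMap.id + cyc3 K V + cyc3 K V ∘ₗ cyc3 K V

@[simp]
lemma cyc3_tmul (x y z : V) : cyc3 K V (x ⊗ₜ[K] (y ⊗ₜ[K] z)) = y ⊗ₜ (z ⊗ₜ x) := by
  simp [cyc3]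

@[simp]
lemma swap12_tmul (x y z : V) : swap12 K V (x ⊗ₜ[K] (y ⊗ₜ[K] z)) = y ⊗ₜ (x ⊗ₜ z) := by
  simp [swap12]

@[simp]
lemma swap23_tmul (x y z : V) : swap23 K V (x ⊗ₜ[K] (y ⊗ₜ[K] z)) = x ⊗ₜ (z ⊗ₜ y) := by
  simp [swap23]

lemma univ_perm_fin_three : (Finset.univ : Finset (Equiv.Perm (Fin 3))) =
    {1, Equiv.swap 0 1, Equiv.swap 0 2, Equiv.swap 1 2,
      Equiv.swap 0 1 * Equiv.swap 0 2, Equiv.swap 0 2 * Equiv.swap 0 1} := by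
  decide

@[simp]
lemma antisymmetrizer_tmul (x y z : V) :
    antisymmetrizer K V (x ⊗ₜ[K] (y ⊗ₜ[K] z))
      = x ⊗ₜ (y ⊗ₜ z) + y ⊗ₜ (z ⊗ₜ x) + z ⊗ₜ (x ⊗ₜ y)
        - y ⊗ₜ (x ⊗ₜ z) - x ⊗ₜ (z ⊗ₜ y) - z ⊗ₜ (y ⊗ₜ x) := by
  rw [antisymmetrizer, univ_perm_fin_three]
  simp (disch := decide) only [Finset.sum_insert, Finset.sum_singleton, LinearMap.add_apply,
    LinearMap.smul_apply, Phi_tmul]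
  simp (disch := decide) [Equiv.swap_apply_of_ne_of_ne, Equiv.Perm.sign_mul, Equiv.swap_inv,
    mul_inv_rev]
  abel

lemma cyclicSum_sub_swap12 (t : V ⊗[K] (V ⊗[K] V)) :
    cyclicSum K V (t - swap12 K V t) = antisymmetrizer K V t := by
  refine LinearMap.congr_fun
    (?_ : cyclicSum K V ∘ₗ (LinearMap.id - swap12 K V) = antisymmetrizer K V) t
  ext x y z
  simp [cyclicSum]
  abel

lemma cyclicSum_sub_swap23 (t : V ⊗[K] (V ⊗[K] V)) :
    cyclicSum K V (t - swap23 K V t) = antisymmetrizer K V t := by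
  refine LinearMap.congr_fun
    (?_ : cyclicSum K V ∘ₗ (LinearMap.id - swap23 K V) = antisymmetrizer K V) t
  ext x y z
  simp [cyclicSum]
  abel

lemma antisymmetrizer_cyc3 (t : V ⊗[K] (V ⊗[K] V)) :
    antisymmetrizer K V (cyc3 K V t) = antisymmetrizer K V t := by
  refine LinearMap.congr_fun (?_ : antisymmetrizer K V ∘ₗ cyc3 K V = antisymmetrizer K V) t
  ext x y z
  simp
  abel

section Comultiplication

variable (Δ : V →ₗ[K] V ⊗[K] V) (β : V →ₗ[K] V)

lemma assoc_map_sub_deltaOp_left (t : V ⊗[K] V) :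
    TensorProduct.assoc K V V V (map (Δ - deltaOp Δ) β t)
      = TensorProduct.assoc K V V V (map Δ β t)
        - swap12 K V (TensorProduct.assoc K V V V (map Δ β t)) := by
  refine LinearMap.congr_fun
    (?_ : (TensorProduct.assoc K V V V).toLinearMap ∘ₗ map (Δ - deltaOp Δ) β
      = (LinearMap.id - swap12 K V) ∘ₗ (TensorProduct.assoc K V V V).toLinearMap ∘ₗ map Δ β) t
  ext a b
  simp [swap12, deltaOp, sub_tmul]

lemma map_sub_deltaOp_right (t : V ⊗[K] V) :
    map β (Δ - deltaOp Δ) t = map β Δ t - swap23 K V (map β Δ t) := by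
  refine LinearMap.congr_fun
    (?_ : map β (Δ - deltaOp Δ) = (LinearMap.id - swap23 K V) ∘ₗ map β Δ) t
  ext a b
  simp [swap23, deltaOp, tmul_sub]

lemma cyc3_map_comm (t : V ⊗[K] V) :
    cyc3 K V (map β Δ (TensorProduct.comm K V V t))
      = TensorProduct.assoc K V V V (map Δ β t) := by
  simp only [cyc3, LinearMap.comp_apply, LinearEquiv.coe_coe, ← map_comm, comm_comm]

lemma antisymmetrizer_map_comm (t : V ⊗[K] V) :
    antisymmetrizer K V (map β Δ (TensorProduct.comm K V V t))
      = antisymmetrizer K V (TensorProduct.assoc K V V V (map Δ β t)) := by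
  rw [← cyc3_map_comm, antisymmetrizer_cyc3]

lemma antisymmetrizer_assoc_map_comm (t : V ⊗[K] V) :
    antisymmetrizer K V (TensorProduct.assoc K V V V (map Δ β (TensorProduct.comm K V V t)))
      = antisymmetrizer K V (map β Δ t) := by
  rw [← antisymmetrizer_map_comm, comm_comm]

lemma cyclicSum_coassoc_sub_deltaOp (v : V) :
    cyclicSum K V (coassoc (Δ - deltaOp Δ) β v)
      = (2 : ℤ) • antisymmetrizer K V (coassoc Δ β v) := by
  have hL : (Δ - deltaOp Δ) v = Δ v - TensorProduct.comm K V V (Δ v) := rfl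
  have hc : coassoc (Δ - deltaOp Δ) β v
      = TensorProduct.assoc K V V V (map (Δ - deltaOp Δ) β ((Δ - deltaOp Δ) v))
        - map β (Δ - deltaOp Δ) ((Δ - deltaOp Δ) v) := rfl
  rw [hc, assoc_map_sub_deltaOp_left, map_sub_deltaOp_right, map_sub, cyclicSum_sub_swap12,
    cyclicSum_sub_swap23, hL]
  simp only [map_sub, antisymmetrizer_map_comm, antisymmetrizer_assoc_map_comm, coassoc,
    LinearMap.sub_apply, LinearMap.comp_apply, LinearEquiv.coe_coe]
  module

end Comultiplication

end Coassociator

open Coassociator in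
/-- c_β(Δ_L) + C ∘ c_β(Δ_L) + C² ∘ c_β(Δ_L)
= 2 Σ_{σ ∈ S₃} sgn(σ) Φ_σ ∘ c_β(Δ). -/
theorem stmt16 {K V : Type*} [Field K] [AddCommGroup V] [Module K V]
    (Δ : V →ₗ[K] V ⊗[K] V) (β : V →ₗ[K] V) :
    coassoc (Δ - deltaOp Δ) β
      + cyc3 K V ∘ₗ coassoc (Δ - deltaOp Δ) β
      + (cyc3 K V ∘ₗ cyc3 K V) ∘ₗ coassoc (Δ - deltaOp Δ) β
    = (2 : ℤ) • ∑ σ : Equiv.Perm (Fin 3),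
        ((Equiv.Perm.sign σ : ℤ) • (Phi σ ∘ₗ coassoc Δ β)) := by
  have hcyc : coassoc (Δ - deltaOp Δ) β
      + cyc3 K V ∘ₗ coassoc (Δ - deltaOp Δ) β
      + (cyc3 K V ∘ₗ cyc3 K V) ∘ₗ coassoc (Δ - deltaOp Δ) β
      = cyclicSum K V ∘ₗ coassoc (Δ - deltaOp Δ) β := by
    simp only [cyclicSum, LinearMap.add_comp, LinearMap.id_comp]
  rw [hcyc]
  ext v
  rw [LinearMap.comp_apply, cyclicSum_coassoc_sub_deltaOp]
  simp [antisymmetrizer, LinearMap.sum_apply]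
end

section
/- Let K be a field of characteristic zero, V a K-vector space, and Δ : V → V ⊗ V, β : V → V K-linear maps. Then (V, Δ, β) is a Hom-Lie admissible Hom-coalgebra, i.e. c_β(Δ_L) + C ∘ c_β(Δ_L) + C² ∘ c_β(Δ_L) = 0 where C is the 3-cycle map a ⊗ b ⊗ c ↦ b ⊗ c ⊗ a, if and only if Σ_{σ ∈ S₃} sgn(σ) Φ_σ ∘ c_β(Δ) = 0. -/
open TensorProduct

set_option linter.unusedSectionVars false

/-!
Write `c_β(Λ) = F_Λ ∘ Λ` with `F_Λ (a ⊗ b) = Λ a ⊗ β b - β a ⊗ Λ b` and let `P = 1 + C + C²`.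
Since `C³ = 1`, `P ∘ C = P`, and `C (q ⊗ t) = t ⊗ q` (reassociated) makes `P ∘ F_Λ` alternating
under the flip `τ`. As `Δ_L = (1 - τ) ∘ Δ`, this gives `P ∘ c_β(Δ_L) = 2 • P ∘ F_{Δ_L} ∘ Δ`.
Finally `P ∘ (1 - τ)`, with `τ` acting on either pair of adjacent factors, is the alternating sum
`Q = Σ sgn(σ) Φ_σ` over `S₃`, so `P ∘ F_{Δ_L} = Q ∘ F_Δ` and `P ∘ c_β(Δ_L) = 2 • Q ∘ c_β(Δ)`;
in characteristic zero the factor `2` can be cancelled.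
-/

section HomLieAdmissible

variable {K V : Type*} [Field K] [AddCommGroup V] [Module K V]

variable (K V) in
noncomputable def cyclicSum : V ⊗[K] (V ⊗[K] V) →ₗ[K] V ⊗[K] (V ⊗[K] V) :=
  LinearMap.id + cyc3 K V + cyc3 K V ∘ₗ cyc3 K V

variable (K V) in
noncomputable def signedPermSum : V ⊗[K] (V ⊗[K] V) →ₗ[K] V ⊗[K] (V ⊗[K] V) :=
  ∑ σ : Equiv.Perm (Fin 3), (Equiv.Perm.sign σ : ℤ) • Phi σ

lemma cyc3_tmul (x : V) (t : V ⊗[K] V) :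
    cyc3 K V (x ⊗ₜ[K] t) = TensorProduct.assoc K V V V (t ⊗ₜ[K] x) := by
  simp [cyc3]

lemma cyc3_tmul_tmul (x y z : V) :
    cyc3 K V (x ⊗ₜ[K] (y ⊗ₜ[K] z)) = y ⊗ₜ[K] (z ⊗ₜ[K] x) := by
  simp [cyc3]

lemma cyc3_comp_cyc3_comp_cyc3 : cyc3 K V ∘ₗ cyc3 K V ∘ₗ cyc3 K V = LinearMap.id := by
  ext x y z
  simp [cyc3_tmul_tmul]

lemma cyclicSum_comp_cyc3 : cyclicSum K V ∘ₗ cyc3 K V = cyclicSum K V := by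
  rw [cyclicSum, LinearMap.add_comp, LinearMap.add_comp, LinearMap.comp_assoc,
    cyc3_comp_cyc3_comp_cyc3, LinearMap.id_comp]
  abel

lemma univ_perm_fin_three : (Finset.univ : Finset (Equiv.Perm (Fin 3))) =
    {1, Equiv.swap 0 1, Equiv.swap 0 2, Equiv.swap 1 2,
      Equiv.swap 0 1 * Equiv.swap 1 2, Equiv.swap 1 2 * Equiv.swap 0 1} := by
  decide

lemma signedPermSum_tmul (x y z : V) :
    signedPermSum K V (x ⊗ₜ[K] (y ⊗ₜ[K] z)) =
      x ⊗ₜ (y ⊗ₜ z) - y ⊗ₜ (x ⊗ₜ z) - z ⊗ₜ (y ⊗ₜ x)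
        - x ⊗ₜ (z ⊗ₜ y) + z ⊗ₜ (x ⊗ₜ y) + y ⊗ₜ (z ⊗ₜ x) := by
  rw [signedPermSum, univ_perm_fin_three]
  simp +decide [Finset.sum_insert, Phi_tmul, Equiv.swap_apply_of_ne_of_ne, sub_eq_add_neg,
    add_assoc]

lemma cyclicSum_comp_assoc_rTensor_antisymm :
    cyclicSum K V ∘ₗ (TensorProduct.assoc K V V V).toLinearMap
        ∘ₗ LinearMap.rTensor V (LinearMap.id - (TensorProduct.comm K V V).toLinearMap)
      = signedPermSum K V ∘ₗ (TensorProduct.assoc K V V V).toLinearMap := by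
  ext x y z
  simp only [cyclicSum, LinearMap.comp_apply, LinearMap.add_apply, LinearMap.sub_apply,
    LinearMap.id_apply, LinearEquiv.coe_coe, LinearMap.rTensor_tmul,
    TensorProduct.AlgebraTensorModule.curry_apply, TensorProduct.curry_apply,
    LinearMap.restrictScalars_self, comm_tmul, assoc_tmul, sub_tmul, map_sub,
    cyc3_tmul_tmul, signedPermSum_tmul]
  abel

lemma cyclicSum_comp_lTensor_antisymm :
    cyclicSum K V ∘ₗ LinearMap.lTensor V (LinearMap.id - (TensorProduct.comm K V V).toLinearMap)
      = signedPermSum K V := by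
  ext x y z
  simp only [cyclicSum, LinearMap.comp_apply, LinearMap.add_apply, LinearMap.sub_apply,
    LinearMap.id_apply, LinearEquiv.coe_coe, LinearMap.lTensor_tmul,
    TensorProduct.AlgebraTensorModule.curry_apply, TensorProduct.curry_apply,
    LinearMap.restrictScalars_self, comm_tmul, tmul_sub, map_sub,
    cyc3_tmul_tmul, signedPermSum_tmul]
  abel

noncomputable def coassocFactor (Λ : V →ₗ[K] V ⊗[K] V) (β : V →ₗ[K] V) :
    V ⊗[K] V →ₗ[K] V ⊗[K] (V ⊗[K] V) :=
  (TensorProduct.assoc K V V V).toLinearMap ∘ₗ TensorProduct.map Λ β - TensorProduct.map β Λ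

lemma coassoc_eq_coassocFactor_comp (Λ : V →ₗ[K] V ⊗[K] V) (β : V →ₗ[K] V) :
    coassoc Λ β = coassocFactor Λ β ∘ₗ Λ := by
  rw [coassoc, coassocFactor, LinearMap.sub_comp, LinearMap.comp_assoc]

lemma cyclicSum_comp_coassocFactor_comp_comm (Λ : V →ₗ[K] V ⊗[K] V) (β : V →ₗ[K] V) :
    cyclicSum K V ∘ₗ coassocFactor Λ β ∘ₗ (TensorProduct.comm K V V).toLinearMap
      = -(cyclicSum K V ∘ₗ coassocFactor Λ β) := by
  have hrot (x : V) (t : V ⊗[K] V) :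
      cyclicSum K V (x ⊗ₜ t) = cyclicSum K V (TensorProduct.assoc K V V V (t ⊗ₜ x)) := by
    rw [← cyc3_tmul, ← LinearMap.comp_apply, cyclicSum_comp_cyc3]
  ext a b
  simp [coassocFactor, hrot]

lemma cyclicSum_comp_coassocFactor_antisymm (Δ : V →ₗ[K] V ⊗[K] V) (β : V →ₗ[K] V) :
    cyclicSum K V ∘ₗ
        coassocFactor ((LinearMap.id - (TensorProduct.comm K V V).toLinearMap) ∘ₗ Δ) β
      = signedPermSum K V ∘ₗ coassocFactor Δ β := by
  rw [coassocFactor, coassocFactor, ← LinearMap.rTensor_comp_map, ← LinearMap.lTensor_comp_map,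
    LinearMap.comp_sub, LinearMap.comp_sub, ← LinearMap.comp_assoc,
    ← LinearMap.comp_assoc, ← LinearMap.comp_assoc, LinearMap.comp_assoc _ _ (cyclicSum K V),
    cyclicSum_comp_assoc_rTensor_antisymm, cyclicSum_comp_lTensor_antisymm,
    LinearMap.comp_assoc]

lemma cyclicSum_comp_coassoc_sub_deltaOp (Δ : V →ₗ[K] V ⊗[K] V) (β : V →ₗ[K] V) :
    cyclicSum K V ∘ₗ coassoc (Δ - deltaOp Δ) β
      = (2 : K) • (signedPermSum K V ∘ₗ coassoc Δ β) := by
  set τ := (TensorProduct.comm K V V).toLinearMap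
  have hΔ : Δ - deltaOp Δ = (LinearMap.id - τ) ∘ₗ Δ := by
    rw [LinearMap.sub_comp, LinearMap.id_comp, deltaOp]
  have hτ : cyclicSum K V ∘ₗ coassocFactor (Δ - deltaOp Δ) β ∘ₗ (LinearMap.id - τ)
      = (2 : K) • (cyclicSum K V ∘ₗ coassocFactor (Δ - deltaOp Δ) β) := by
    rw [LinearMap.comp_sub, LinearMap.comp_sub, LinearMap.comp_id,
      cyclicSum_comp_coassocFactor_comp_comm, sub_neg_eq_add, two_smul]
  calc cyclicSum K V ∘ₗ coassoc (Δ - deltaOp Δ) β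
      = (cyclicSum K V ∘ₗ coassocFactor (Δ - deltaOp Δ) β ∘ₗ (LinearMap.id - τ)) ∘ₗ Δ := by
        rw [coassoc_eq_coassocFactor_comp, hΔ]
        rfl
    _ = (2 : K) • (signedPermSum K V ∘ₗ coassoc Δ β) := by
        rw [hτ, hΔ, cyclicSum_comp_coassocFactor_antisymm, coassoc_eq_coassocFactor_comp,
          LinearMap.smul_comp, LinearMap.comp_assoc]

end HomLieAdmissible

/-- over a field of characteristic zero, (V, Δ, β) is a Hom-Lie
admissible Hom-coalgebra if and only if Σ_{σ ∈ S₃} sgn(σ) Φ_σ ∘ c_β(Δ) = 0. -/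
theorem stmt17 {K V : Type*} [Field K] [CharZero K] [AddCommGroup V] [Module K V]
    (Δ : V →ₗ[K] V ⊗[K] V) (β : V →ₗ[K] V) :
    (coassoc (Δ - deltaOp Δ) β
        + cyc3 K V ∘ₗ coassoc (Δ - deltaOp Δ) β
        + (cyc3 K V ∘ₗ cyc3 K V) ∘ₗ coassoc (Δ - deltaOp Δ) β = 0)
      ↔ (∑ σ : Equiv.Perm (Fin 3),
          ((Equiv.Perm.sign σ : ℤ) • (Phi σ ∘ₗ coassoc Δ β)) = 0) := by
  have hcyc : coassoc (Δ - deltaOp Δ) β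
        + cyc3 K V ∘ₗ coassoc (Δ - deltaOp Δ) β
        + (cyc3 K V ∘ₗ cyc3 K V) ∘ₗ coassoc (Δ - deltaOp Δ) β
      = cyclicSum K V ∘ₗ coassoc (Δ - deltaOp Δ) β := by
    rw [cyclicSum, LinearMap.add_comp, LinearMap.add_comp, LinearMap.id_comp]
  have hsign : ∑ σ : Equiv.Perm (Fin 3), ((Equiv.Perm.sign σ : ℤ) • (Phi σ ∘ₗ coassoc Δ β))
      = signedPermSum K V ∘ₗ coassoc Δ β := by
    ext v
    simp [signedPermSum]
  rw [hcyc, hsign, cyclicSum_comp_coassoc_sub_deltaOp, smul_eq_zero, or_iff_right two_ne_zero]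
end

section
/- Let K be a field, V a K-vector space, Δ : V → V ⊗ V and β : V → V K-linear maps, and G a subgroup of the symmetric group S₃ such that (V, Δ, β) is a G-Hom-coalgebra, i.e. Σ_{σ ∈ G} sgn(σ) Φ_σ ∘ c_β(Δ) = 0. On the dual space V* = Hom_K(V, K) define the multiplication μ*(f, g) := m_K ∘ (f ⊗ g) ∘ Δ for f, g ∈ V* (where m_K : K ⊗ K → K is the multiplication of K, so μ*(f,g) is the composite V → V ⊗ V → K ⊗ K → K), and define α* : V* → V* by α*(f) := f ∘ β. Then (V*, μ*, α*) is a G-Hom-associative algebra: for all f₁, f₂, f₃ ∈ V*, Σ_{σ ∈ G} sgn(σ) · a(f_{σ⁻¹(1)}, f_{σ⁻¹(2)}, f_{σ⁻¹(3)}) = 0, where a(f, g, h) := μ*(μ*(f,g), α*(h)) − μ*(α*(f), μ*(g,h)) is the α*-associator. -/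
open TensorProduct

set_option linter.unusedSectionVars false

section Dual

variable {K V : Type*} [Field K] [AddCommGroup V] [Module K V]

/-- The dual multiplication μ*(f,g) := m_K ∘ (f ⊗ g) ∘ Δ on V* = Hom_K(V,K). -/
noncomputable def mulStar (Δ : V →ₗ[K] V ⊗[K] V) (f g : V →ₗ[K] K) : V →ₗ[K] K :=
  LinearMap.mul' K K ∘ₗ TensorProduct.map f g ∘ₗ Δ

/-- α* : V* → V*, α*(f) := f ∘ β. -/
noncomputable def alphaStar (β : V →ₗ[K] V) (f : V →ₗ[K] K) : V →ₗ[K] K :=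
  f ∘ₗ β

/-- The α*-associator a(f,g,h) := μ*(μ*(f,g), α*(h)) − μ*(α*(f), μ*(g,h)). -/
noncomputable def dualAssociator (Δ : V →ₗ[K] V ⊗[K] V) (β : V →ₗ[K] V)
    (f g h : V →ₗ[K] K) : V →ₗ[K] K :=
  mulStar Δ (mulStar Δ f g) (alphaStar β h)
    - mulStar Δ (alphaStar β f) (mulStar Δ g h)

end Dual

/-!
Write `⟨f ⊗ g ⊗ h⟩ = evalTriple f g h : V ⊗ (V ⊗ V) → K` for `x ⊗ y ⊗ z ↦ f x · g y · h z`.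
Unfolding μ* and α*, the dual associator is `a(f, g, h) = ⟨f ⊗ g ⊗ h⟩ ∘ c_β(Δ)`, and
`⟨f₁ ⊗ f₂ ⊗ f₃⟩ ∘ Φ_σ = ⟨f_{σ(1)} ⊗ f_{σ(2)} ⊗ f_{σ(3)}⟩`. Reindexing the sum by `σ ↦ σ⁻¹`,
which preserves `G` and the sign, the `G`-alternating sum of associators becomes
`⟨f₁ ⊗ f₂ ⊗ f₃⟩ ∘ Σ_{σ ∈ G} sgn(σ) Φ_σ ∘ c_β(Δ) = 0`.
-/

open Finset in
theorem Subgroup.sum_filter_mem_inv {α M : Type*} [Group α] [Fintype α] [AddCommMonoid M]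
    (G : Subgroup α) [DecidablePred (· ∈ G)] (f : α → M) :
    ∑ σ ∈ univ.filter (· ∈ G), f σ⁻¹ = ∑ σ ∈ univ.filter (· ∈ G), f σ :=
  sum_equiv (Equiv.inv α) (by simp) (by simp)

section EvalTriple

variable {K V : Type*} [CommSemiring K] [AddCommMonoid V] [Module K V]

noncomputable def evalTriple (f g h : V →ₗ[K] K) : V ⊗[K] (V ⊗[K] V) →ₗ[K] K :=
  LinearMap.mul' K K ∘ₗ TensorProduct.map f (LinearMap.mul' K K ∘ₗ TensorProduct.map g h)

@[simp]
theorem evalTriple_tmul (f g h : V →ₗ[K] K) (x y z : V) :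
    evalTriple f g h (x ⊗ₜ[K] (y ⊗ₜ[K] z)) = f x * (g y * h z) := by
  simp [evalTriple]

theorem evalTriple_comp_assoc (f g h : V →ₗ[K] K) :
    evalTriple f g h ∘ₗ (TensorProduct.assoc K V V V).toLinearMap
      = LinearMap.mul' K K ∘ₗ TensorProduct.map (LinearMap.mul' K K ∘ₗ TensorProduct.map f g) h := by
  ext x y z
  simp [mul_assoc]

end EvalTriple

section Dual

variable {K V : Type*} [Field K] [AddCommGroup V] [Module K V]

theorem dualAssociator_eq_evalTriple_comp_coassoc (Δ : V →ₗ[K] V ⊗[K] V) (β : V →ₗ[K] V)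
    (f g h : V →ₗ[K] K) :
    dualAssociator Δ β f g h = evalTriple f g h ∘ₗ coassoc Δ β := by
  have hleft : LinearMap.mul' K K ∘ₗ TensorProduct.map (mulStar Δ f g) (alphaStar β h)
      = evalTriple f g h ∘ₗ (TensorProduct.assoc K V V V).toLinearMap ∘ₗ TensorProduct.map Δ β := by
    rw [← LinearMap.comp_assoc, evalTriple_comp_assoc, LinearMap.comp_assoc,
      ← TensorProduct.map_comp]
    rfl
  have hright : LinearMap.mul' K K ∘ₗ TensorProduct.map (alphaStar β f) (mulStar Δ g h)
      = evalTriple f g h ∘ₗ TensorProduct.map β Δ := by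
    rw [evalTriple, LinearMap.comp_assoc, ← TensorProduct.map_comp]
    rfl
  calc dualAssociator Δ β f g h
      = (LinearMap.mul' K K ∘ₗ TensorProduct.map (mulStar Δ f g) (alphaStar β h)) ∘ₗ Δ
        - (LinearMap.mul' K K ∘ₗ TensorProduct.map (alphaStar β f) (mulStar Δ g h)) ∘ₗ Δ := rfl
    _ = evalTriple f g h ∘ₗ coassoc Δ β := by
      rw [hleft, hright, coassoc, LinearMap.comp_sub]
      rfl

theorem evalTriple_comp_Phi (F : Fin 3 → V →ₗ[K] K) (σ : Equiv.Perm (Fin 3)) :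
    evalTriple (F 0) (F 1) (F 2) ∘ₗ Phi σ = evalTriple (F (σ 0)) (F (σ 1)) (F (σ 2)) := by
  refine TensorProduct.ext_threefold' fun x y z => ?_
  set m := ![x, y, z]
  have hprod : ∏ i, F i (m (σ⁻¹ i)) = ∏ j, F (σ j) (m j) := by
    rw [← Equiv.prod_comp σ]
    simp
  simpa [Phi_tmul, Fin.prod_univ_three, m, mul_assoc] using hprod

end Dual

/-- the dual of a G-Hom-coalgebra is a G-Hom-associative algebra. -/
theorem stmt19 {K V : Type*} [Field K] [AddCommGroup V] [Module K V]
    (Δ : V →ₗ[K] V ⊗[K] V) (β : V →ₗ[K] V)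
    (G : Subgroup (Equiv.Perm (Fin 3))) [DecidablePred (· ∈ G)]
    (hG : ∑ σ ∈ Finset.univ.filter (· ∈ G),
        ((Equiv.Perm.sign σ : ℤ) • (Phi σ ∘ₗ coassoc Δ β)) = 0) :
    ∀ f₁ f₂ f₃ : V →ₗ[K] K,
      ∑ σ ∈ Finset.univ.filter (· ∈ G),
        ((Equiv.Perm.sign σ : ℤ) •
          dualAssociator Δ β (![f₁, f₂, f₃] (σ⁻¹ 0)) (![f₁, f₂, f₃] (σ⁻¹ 1))
            (![f₁, f₂, f₃] (σ⁻¹ 2))) = 0 := by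
  intro f₁ f₂ f₃
  set E := evalTriple f₁ f₂ f₃
  have hterm (σ : Equiv.Perm (Fin 3)) :
      dualAssociator Δ β (![f₁, f₂, f₃] (σ⁻¹ 0)) (![f₁, f₂, f₃] (σ⁻¹ 1))
          (![f₁, f₂, f₃] (σ⁻¹ 2))
        = E ∘ₗ Phi σ⁻¹ ∘ₗ coassoc Δ β := by
    rw [dualAssociator_eq_evalTriple_comp_coassoc, ← evalTriple_comp_Phi ![f₁, f₂, f₃] σ⁻¹]
    rfl
  calc _ = ∑ σ ∈ Finset.univ.filter (· ∈ G),
          ((Equiv.Perm.sign σ⁻¹ : ℤ) • (E ∘ₗ Phi σ⁻¹ ∘ₗ coassoc Δ β)) := by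
        simp only [hterm, Equiv.Perm.sign_inv]
    _ = ∑ σ ∈ Finset.univ.filter (· ∈ G),
          ((Equiv.Perm.sign σ : ℤ) • (E ∘ₗ Phi σ ∘ₗ coassoc Δ β)) :=
        G.sum_filter_mem_inv fun σ => (Equiv.Perm.sign σ : ℤ) • (E ∘ₗ Phi σ ∘ₗ coassoc Δ β)
    _ = E ∘ₗ ∑ σ ∈ Finset.univ.filter (· ∈ G),
          ((Equiv.Perm.sign σ : ℤ) • (Phi σ ∘ₗ coassoc Δ β)) := by
        ext w
        simp [map_sum]
    _ = 0 := by rw [hG, LinearMap.comp_zero]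
end
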